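/- arXiv:2011.11945 — 3 statements merged into one kernel-verified Lean document; each statement's English description precedes it below -/
import Mathlib

section
/- Fix m ∈ {0,1} and α ∈ ℂ^r, and let A(α) be the 2^r × 2^r complex matrix with rows indexed by δ ∈ {±1}^r and columns by ε ∈ {±1}^r, with (δ,ε)-entry (−1)^m · exp((π√−1/2)·∑_{j=1}^r ε_j δ_j α_j). Then for every a ∈ {0,1}^r, the vector κ_a = (∏_j ε_j^{a_j})_ε is an eigenvector of A(α) with eigenvalue (−1)^m · 2^r · (√−1)^{|a|} · ∏_{j=1}^r cos(π(α_j − a_j)/2). -/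
open Matrix

/-- The sign `±1` associated to a Boolean. -/
def sg (b : Bool) : ℂ := if b then 1 else -1

/-- The exponent `0` or `1` associated to a Boolean. -/
def aN (b : Bool) : ℕ := if b then 1 else 0

/-- The `2^r × 2^r` matrix `A(α)` with `(δ,ε)`-entry
`(-1)^m exp((π√-1/2) ∑_j ε_j δ_j α_j)`. -/
noncomputable def Amat (r m : ℕ) (α : Fin r → ℂ) :
    Matrix (Fin r → Bool) (Fin r → Bool) ℂ :=
  Matrix.of fun δ ε =>
    (-1 : ℂ) ^ m * Complex.exp ((Real.pi : ℂ) * Complex.I / 2 * ∑ j, sg (ε j) * sg (δ j) * α j)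

/-- The vector `κ_a`, indexed by sign vectors `ε ∈ {±1}^r`, with entry `∏_j ε_j^{a_j}`. -/
def kappa (r : ℕ) (a : Fin r → Bool) : (Fin r → Bool) → ℂ :=
  fun ε => ∏ j, sg (ε j) ^ aN (a j)

lemma sum_bool_key (d b : Bool) (α : ℂ) :
    (∑ e : Bool, Complex.exp ((Real.pi : ℂ) * Complex.I / 2 * (sg e * sg d * α)) * sg e ^ aN b)
      = 2 * Complex.I ^ aN b * Complex.cos ((Real.pi : ℂ) * (α - aN b) / 2) * sg d ^ aN b := by
  rw [Fintype.sum_bool]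
  cases d <;> cases b <;>
    simp only [sg, aN, if_true, if_false, pow_one, pow_zero, mul_one, Nat.cast_one,
      Nat.cast_zero, sub_zero] <;>
    [skip; rw [show (Real.pi : ℂ) * (α - 1) / 2 = -((Real.pi : ℂ)/2 - (Real.pi:ℂ)*α/2) by ring,
        Complex.cos_neg, Complex.cos_pi_div_two_sub];
     skip; rw [show (Real.pi : ℂ) * (α - 1) / 2 = -((Real.pi : ℂ)/2 - (Real.pi:ℂ)*α/2) by ring,
        Complex.cos_neg, Complex.cos_pi_div_two_sub]] <;>
    simp only [Complex.cos, Complex.sin] <;> ring_nf <;>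
    simp [Complex.I_sq] <;> ring_nf

theorem kappa_eigenvector (r m : ℕ) (hm : m = 0 ∨ m = 1) (α : Fin r → ℂ)
    (a : Fin r → Bool) :
    (Amat r m α).mulVec (kappa r a) =
      ((-1 : ℂ) ^ m * 2 ^ r * Complex.I ^ (∑ j, aN (a j)) *
          ∏ j, Complex.cos ((Real.pi : ℂ) * (α j - aN (a j)) / 2)) • kappa r a := by
  funext δ
  simp only [Matrix.mulVec, dotProduct, Amat, Matrix.of_apply, kappa, Pi.smul_apply,
    smul_eq_mul]
  have h1 : ∀ ε : Fin r → Bool,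
      (-1 : ℂ) ^ m *
          Complex.exp ((Real.pi : ℂ) * Complex.I / 2 * ∑ j, sg (ε j) * sg (δ j) * α j) *
          ∏ j, sg (ε j) ^ aN (a j)
        = (-1 : ℂ) ^ m *
            ∏ j, (Complex.exp ((Real.pi : ℂ) * Complex.I / 2 * (sg (ε j) * sg (δ j) * α j)) *
              sg (ε j) ^ aN (a j)) := by
    intro ε
    rw [Finset.mul_sum, Complex.exp_sum, mul_assoc, ← Finset.prod_mul_distrib]
  rw [Finset.sum_congr rfl fun ε _ => h1 ε, ← Finset.mul_sum]
  have h2 : (∑ ε : Fin r → Bool,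
      ∏ j, (Complex.exp ((Real.pi : ℂ) * Complex.I / 2 * (sg (ε j) * sg (δ j) * α j)) *
        sg (ε j) ^ aN (a j)))
      = ∏ j, ∑ e : Bool,
          Complex.exp ((Real.pi : ℂ) * Complex.I / 2 * (sg e * sg (δ j) * α j)) *
            sg e ^ aN (a j) := by
    rw [Finset.prod_univ_sum]
    apply Finset.sum_congr _ fun _ _ => rfl
    ext p
    simp [Fintype.mem_piFinset]
  rw [h2, Finset.prod_congr rfl fun j _ => sum_bool_key (δ j) (a j) (α j)]
  rw [Finset.prod_mul_distrib, Finset.prod_mul_distrib, Finset.prod_mul_distrib,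
    Finset.prod_const, Finset.card_univ, Finset.prod_pow_eq_pow_sum]
  simp only [Fintype.card_fin]
  ring
end

section
/- Let A(α) be as above and J := 2^{−r/2}(κ_a)_{a∈{0,1}^r}. Then Jᵀ A(α) J = (−1)^m · 2^r · diag((√−1)^{|a|} · Q_a(α))_{a∈{0,1}^r}, where Q_a(α) := ∏_{j=1}^r cos(π(α_j − a_j)/2). -/
open Matrix

/-- The orthogonal matrix `J = 2^{-r/2}(κ_a)_a`, with rows indexed by sign vectors
`ε ∈ {±1}^r` and columns by `a ∈ {0,1}^r`. -/
noncomputable def Jmat (r : ℕ) : Matrix (Fin r → Bool) (Fin r → Bool) ℂ :=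
  Matrix.of fun ε a => (((2 : ℝ) ^ (-(r : ℝ) / 2) : ℝ) : ℂ) * ∏ j, sg (ε j) ^ aN (a j)

lemma key_cos_sum (x : ℂ) (p q : Bool) :
    ∑ d : Bool, ∑ e : Bool, sg d ^ aN p * sg e ^ aN q *
      Complex.exp ((Real.pi : ℂ) * Complex.I / 2 * (sg e * sg d * x)) =
    if p = q then 4 * Complex.I ^ aN p * Complex.cos ((Real.pi : ℂ) * (x - aN p) / 2) else 0 := by
  cases p <;> cases q <;>
    simp only [Fintype.sum_bool, sg, aN, if_true, if_false, Bool.false_eq_true,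
      Bool.true_eq_false, pow_zero, pow_one, one_mul, mul_one, reduceIte,
      Nat.cast_zero, Nat.cast_one]
  · rw [show (Real.pi:ℂ)*(x-0)/2 = (Real.pi:ℂ)*x/2 by ring, Complex.cos]; ring_nf
  · ring_nf
  · ring_nf
  · rw [show (Real.pi:ℂ)*(x-1)/2 = -((Real.pi:ℂ)/2 - (Real.pi:ℂ)*x/2) by ring,
      Complex.cos_neg, Complex.cos_pi_div_two_sub, Complex.sin]
    ring_nf
    rw [Complex.I_sq]
    ring_nf

theorem Jmat_diagonalizes_Amat (r m : ℕ) (hm : m = 0 ∨ m = 1) (α : Fin r → ℂ) :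
    (Jmat r)ᵀ * Amat r m α * Jmat r =
      Matrix.diagonal fun a : Fin r → Bool =>
        (-1 : ℂ) ^ m * 2 ^ r * Complex.I ^ (∑ j, aN (a j)) *
          ∏ j, Complex.cos ((Real.pi : ℂ) * (α j - aN (a j)) / 2) := by
  set c : ℂ := (((2 : ℝ) ^ (-(r : ℝ) / 2) : ℝ) : ℂ) with hc
  ext a b
  have lhs_eq : ((Jmat r)ᵀ * Amat r m α * Jmat r) a b
      = (c * c * (-1:ℂ)^m) * ∏ j, ∑ d : Bool, ∑ e : Bool,
          sg d ^ aN (a j) * sg e ^ aN (b j) *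
          Complex.exp ((Real.pi:ℂ)*Complex.I/2*(sg e * sg d * α j)) := by
    rw [Fintype.prod_sum]
    simp only [Fintype.prod_sum, Finset.mul_sum]
    simp only [Matrix.mul_apply, Matrix.transpose_apply, Jmat, Amat, Matrix.of_apply,
      Finset.sum_mul, Finset.mul_sum]
    rw [Finset.sum_comm]
    refine Finset.sum_congr rfl fun δ _ => Finset.sum_congr rfl fun ε _ => ?_
    rw [Complex.exp_sum, Finset.prod_mul_distrib, Finset.prod_mul_distrib]
    ring
  rw [lhs_eq]
  simp only [key_cos_sum]
  by_cases hab : a = b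
  · subst hab
    simp only [eq_self_iff_true, if_true, Matrix.diagonal_apply_eq]
    rw [Finset.prod_mul_distrib, Finset.prod_mul_distrib, Finset.prod_const,
      Finset.prod_pow_eq_pow_sum, Finset.card_univ, Fintype.card_fin]
    have h1 : ((2:ℝ) ^ (-(r:ℝ)/2)) * ((2:ℝ) ^ (-(r:ℝ)/2)) = ((2:ℝ)^r)⁻¹ := by
      rw [← Real.rpow_add two_pos, show -(r:ℝ)/2 + -(r:ℝ)/2 = -(r:ℝ) by ring,
        Real.rpow_neg (by norm_num), Real.rpow_natCast]
    have hcc : c * c * 4 ^ r = 2 ^ r := by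
      rw [hc, ← Complex.ofReal_mul, h1]
      push_cast
      rw [show ((2:ℂ)^r)⁻¹ * 4^r = (2:ℂ)^r * ((2^r)⁻¹ * 2^r) by rw [show (4:ℂ) = 2*2 by norm_num, mul_pow]; ring,
        inv_mul_cancel₀ (pow_ne_zero r two_ne_zero), mul_one]
    linear_combination ((-1:ℂ)^m * Complex.I ^ (∑ j, aN (a j)) *
      ∏ j, Complex.cos ((Real.pi:ℂ) * (α j - (aN (a j) : ℂ)) / 2)) * hcc

  · obtain ⟨j0, hj0⟩ : ∃ j, a j ≠ b j := by
      by_contra h; push_neg at h; exact hab (funext h)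
    rw [Matrix.diagonal_apply_ne _ hab]
    refine mul_eq_zero_of_right _ (Finset.prod_eq_zero (Finset.mem_univ j0) ?_)
    simp [hj0]
end

section
/- For α ∈ ℂ^r with r ≥ 2, the determinant of the matrix A(α) with (δ,ε)-entry (−1)^m·exp((π√−1/2)∑_{j=1}^r ε_j δ_j α_j) equals (∏_{j=1}^r 2√−1·sin(πα_j))^{2^{r−1}}. -/
open Matrix

/-!
For `m = 0` the `(δ, ε)`-entry of `A(α)` factors as `∏ⱼ exp (π i/2 · εⱼ δⱼ αⱼ)`, so `A(α)` is, up to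
reindexing, the Kronecker product of the `2 × 2` matrices `B(αⱼ)` with entries `exp (π i/2 · e d a)`,
and `det B(a) = exp (π i a) - exp (-π i a) = 2 i sin (π a)`. Since `det (B ⊗ C) = det B ^ 2^(r-1) · det C ^ 2`
for `C` of size `2^(r-1)`, induction on `r` gives the product formula. The factor `(-1)^m` contributes
`(-1)^(m 2^r) = 1` as soon as `r ≥ 1`.
-/

open Complex Kronecker

noncomputable def expSignMatrix (a : ℂ) : Matrix Bool Bool ℂ :=
  of fun d e => exp ((Real.pi : ℂ) * I / 2 * (sg e * sg d * a))

theorem det_expSignMatrix (a : ℂ) :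
    (expSignMatrix a).det = 2 * I * sin ((Real.pi : ℂ) * a) := by
  rw [← det_submatrix_equiv_self finTwoEquiv, det_fin_two, mul_right_comm, two_sin]
  simp [expSignMatrix, sg, finTwoEquiv, ← exp_add]
  ring_nf
  rw [I_sq]
  ring

theorem Amat_zero_succ (r : ℕ) (α : Fin (r + 1) → ℂ) :
    Amat (r + 1) 0 α =
      reindex (Fin.consEquiv _) (Fin.consEquiv _)
        (expSignMatrix (α 0) ⊗ₖ Amat r 0 (Fin.tail α)) := by
  ext δ ε
  simp [Amat, expSignMatrix, Fin.sum_univ_succ, Fin.tail, mul_add, exp_add]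

theorem det_Amat_zero_succ (r : ℕ) (α : Fin (r + 1) → ℂ) :
    (Amat (r + 1) 0 α).det = (∏ j, 2 * I * sin ((Real.pi : ℂ) * α j)) ^ 2 ^ r := by
  induction r with
  | zero =>
    rw [Amat_zero_succ, det_reindex_self, det_kronecker, det_expSignMatrix, det_unique]
    simp [Amat]
  | succ n ih =>
    rw [Amat_zero_succ, det_reindex_self, det_kronecker, det_expSignMatrix, ih,
      Fin.prod_univ_succ (fun j => 2 * I * sin ((Real.pi : ℂ) * α j)), Fintype.card_bool,
      Fintype.card_fun, Fintype.card_fin, Fintype.card_bool]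
    simp only [Fin.tail]
    ring

theorem Amat_eq_neg_one_pow_smul (r m : ℕ) (α : Fin r → ℂ) :
    Amat r m α = (-1 : ℂ) ^ m • Amat r 0 α := by
  ext δ ε
  simp [Amat]

theorem det_Amat_general (r m : ℕ) (hr : 2 ≤ r) (α : Fin r → ℂ) :
    (Amat r m α).det =
      (∏ j, 2 * Complex.I * Complex.sin ((Real.pi : ℂ) * α j)) ^ (2 ^ (r - 1)) := by
  obtain ⟨k, rfl⟩ : ∃ k, r = k + 1 := ⟨r - 1, by omega⟩
  have hsign : ((-1 : ℂ) ^ m) ^ Fintype.card (Fin (k + 1) → Bool) = 1 := by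
    rw [← pow_mul, Fintype.card_fun, Fintype.card_bool, Fintype.card_fin]
    exact ((Nat.even_pow.2 ⟨even_two, k.succ_ne_zero⟩).mul_left m).neg_one_pow
  rw [Amat_eq_neg_one_pow_smul, det_smul, hsign, one_mul, det_Amat_zero_succ, Nat.add_sub_cancel]

theorem det_Amat (r m : ℕ) (hr : 2 ≤ r) (hm : m = 0 ∨ m = 1) (α : Fin r → ℂ) :
    (Amat r m α).det =
      (∏ j, 2 * Complex.I * Complex.sin ((Real.pi : ℂ) * α j)) ^ (2 ^ (r - 1)) :=
  det_Amat_general r m hr α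
end
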